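/- Let H be a complex Hilbert space, let T and S be EP operators with closed range on H such that T∘S = S∘T, and let T† and S† be the Moore–Penrose inverses of T and S respectively. Then T†∘S† = S†∘T† and T†∘S† is a Moore–Penrose inverse of T∘S. -/

import Mathlib

open ContinuousLinearMap in
/-- Two self-adjoint idempotent continuous operators with the same range are equal. -/
private lemma proj_eq_of_range_eq
    {H : Type*} [NormedAddCommGroup H] [InnerProductSpace ℂ H] [CompleteSpace H]
    (P Q : H →L[ℂ] H)
    (hP : ContinuousLinearMap.adjoint P = P) (hQ : ContinuousLinearMap.adjoint Q = Q)
    (hP2 : P ∘L P = P) (hQ2 : Q ∘L Q = Q)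
    (hr : LinearMap.range (P : H →ₗ[ℂ] H) = LinearMap.range (Q : H →ₗ[ℂ] H)) : P = Q := by
  have hQP : Q ∘L P = P := by
    ext x
    have hx : P x ∈ LinearMap.range (Q : H →ₗ[ℂ] H) := hr ▸ LinearMap.mem_range_self (P : H →ₗ[ℂ] H) x
    obtain ⟨y, hy⟩ := hx
    calc (Q ∘L P) x = Q (P x) := rfl
      _ = Q (Q y) := by rw [← hy]; rfl
      _ = (Q ∘L Q) y := rfl
      _ = Q y := by rw [hQ2]
      _ = P x := hy
  have hPQ : P ∘L Q = Q := by
    ext x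
    have hx : Q x ∈ LinearMap.range (P : H →ₗ[ℂ] H) := hr.symm ▸ LinearMap.mem_range_self (Q : H →ₗ[ℂ] H) x
    obtain ⟨y, hy⟩ := hx
    calc (P ∘L Q) x = P (Q x) := rfl
      _ = P (P y) := by rw [← hy]; rfl
      _ = (P ∘L P) y := rfl
      _ = P y := by rw [hP2]
      _ = Q x := hy
  have := congrArg ContinuousLinearMap.adjoint hQP
  rw [ContinuousLinearMap.adjoint_comp, hP, hQ, hPQ] at this
  exact this.symm

/-- In a ring, the group inverse of `t` commutes with anything commuting with `t`. -/
private lemma group_inv_comm {R : Type*} [Ring R] {t td s : R}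
    (h1 : t * (td * t) = t) (h2 : td * (t * td) = td) (h3 : t * td = td * t)
    (h4 : t * s = s * t) : td * s = s * td := by
  have ht1' : t * td * t = t := by rw [mul_assoc]; exact h1
  have key : t * (t * td) = t := by rw [h3, h1]
  have c1 : t * td * s = td * (s * t) := by rw [h3, mul_assoc, h4]
  have c2 : s * (t * td) = t * s * td := by rw [← mul_assoc, ← h4]
  have hps : t * td * s = s * (t * td) := by
    calc t * td * s = td * (s * t) := c1
      _ = td * (s * (t * (t * td))) := by rw [key]
      _ = (t * td * s) * (t * td) := by rw [c1]; noncomm_ring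
      _ = t * td * (s * (t * td)) := by noncomm_ring
      _ = t * td * (t * s * td) := by rw [c2]
      _ = (t * (td * t)) * (s * td) := by noncomm_ring
      _ = t * (s * td) := by rw [h1]
      _ = (t * s) * td := by rw [mul_assoc]
      _ = (s * t) * td := by rw [h4]
      _ = s * (t * td) := by rw [mul_assoc]
  calc td * s = (td * (t * td)) * s := by rw [h2]
    _ = td * (t * td * s) := by noncomm_ring
    _ = td * (s * (t * td)) := by rw [hps]
    _ = td * (s * t) * td := by noncomm_ring
    _ = td * (t * s) * td := by rw [h4]
    _ = (td * t) * (s * td) := by noncomm_ring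
    _ = (t * td) * (s * td) := by rw [h3]
    _ = (t * td * s) * td := by noncomm_ring
    _ = (s * (t * td)) * td := by rw [hps]
    _ = (s * (td * t)) * td := by rw [h3]
    _ = s * (td * (t * td)) := by noncomm_ring
    _ = s * td := by rw [h2]

/-- If `T` and `S` are commuting EP operators with closed range on a complex Hilbert
space, with Moore–Penrose inverses `Td` and `Sd` respectively, then `Td ∘ Sd = Sd ∘ Td`
and `Td ∘ Sd` is a Moore–Penrose inverse of `T ∘ S`. -/
theorem moore_penrose_of_product_of_commuting_ep
    {H : Type*} [NormedAddCommGroup H] [InnerProductSpace ℂ H] [CompleteSpace H]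
    (T S Td Sd : H →L[ℂ] H)
    (hT : IsClosed (LinearMap.range (T : H →ₗ[ℂ] H) : Set H))
    (hTep : LinearMap.range (T : H →ₗ[ℂ] H) = LinearMap.range (ContinuousLinearMap.adjoint T : H →ₗ[ℂ] H))
    (hS : IsClosed (LinearMap.range (S : H →ₗ[ℂ] H) : Set H))
    (hSep : LinearMap.range (S : H →ₗ[ℂ] H) = LinearMap.range (ContinuousLinearMap.adjoint S : H →ₗ[ℂ] H))
    (hT1 : T ∘L Td ∘L T = T) (hT2 : Td ∘L T ∘L Td = Td)
    (hT3 : ContinuousLinearMap.adjoint (T ∘L Td) = T ∘L Td)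
    (hT4 : ContinuousLinearMap.adjoint (Td ∘L T) = Td ∘L T)
    (hS1 : S ∘L Sd ∘L S = S) (hS2 : Sd ∘L S ∘L Sd = Sd)
    (hS3 : ContinuousLinearMap.adjoint (S ∘L Sd) = S ∘L Sd)
    (hS4 : ContinuousLinearMap.adjoint (Sd ∘L S) = Sd ∘L S)
    (hcomm : T ∘L S = S ∘L T) :
    Td ∘L Sd = Sd ∘L Td ∧
      (T ∘L S) ∘L (Td ∘L Sd) ∘L (T ∘L S) = T ∘L S ∧
      (Td ∘L Sd) ∘L (T ∘L S) ∘L (Td ∘L Sd) = Td ∘L Sd ∧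
      ContinuousLinearMap.adjoint ((T ∘L S) ∘L (Td ∘L Sd)) = (T ∘L S) ∘L (Td ∘L Sd) ∧
      ContinuousLinearMap.adjoint ((Td ∘L Sd) ∘L (T ∘L S)) = (Td ∘L Sd) ∘L (T ∘L S) := by
  -- Step 1 : `T ∘L Td = Td ∘L T` and `S ∘L Sd = Sd ∘L S`.
  have projComm : ∀ (A Ad : H →L[ℂ] H),
      LinearMap.range (A : H →ₗ[ℂ] H) = LinearMap.range (ContinuousLinearMap.adjoint A : H →ₗ[ℂ] H) →
      A ∘L Ad ∘L A = A → Ad ∘L A ∘L Ad = Ad →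
      ContinuousLinearMap.adjoint (A ∘L Ad) = A ∘L Ad →
      ContinuousLinearMap.adjoint (Ad ∘L A) = Ad ∘L A →
      A ∘L Ad = Ad ∘L A := by
    intro A Ad hep h1 h2 h3 h4
    have hI1 : (A ∘L Ad) ∘L (A ∘L Ad) = A ∘L Ad := by
      rw [ContinuousLinearMap.comp_assoc, h2]
    have hI2 : (Ad ∘L A) ∘L (Ad ∘L A) = Ad ∘L A := by
      rw [ContinuousLinearMap.comp_assoc, h1]
    have r1 : LinearMap.range ((A ∘L Ad : H →L[ℂ] H) : H →ₗ[ℂ] H) = LinearMap.range (A : H →ₗ[ℂ] H) := by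
      apply le_antisymm
      · rintro x ⟨y, rfl⟩; exact ⟨Ad y, rfl⟩
      · rintro x ⟨y, rfl⟩
        refine ⟨A y, ?_⟩
        have := ContinuousLinearMap.ext_iff.1 h1 y
        simpa [ContinuousLinearMap.comp_apply] using this
    have r2 : LinearMap.range ((Ad ∘L A : H →L[ℂ] H) : H →ₗ[ℂ] H) = LinearMap.range (A : H →ₗ[ℂ] H) := by
      apply le_antisymm
      · -- range (Ad ∘L A) ≤ range Ad ≤ range A† = range A
        have hfac : (ContinuousLinearMap.adjoint A) ∘L
            ((ContinuousLinearMap.adjoint Ad) ∘L Ad) = Ad := by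
          rw [← ContinuousLinearMap.comp_assoc, ← ContinuousLinearMap.adjoint_comp, h4,
            ContinuousLinearMap.comp_assoc]
          exact h2
        rintro x ⟨y, rfl⟩
        rw [hep]
        refine ⟨(ContinuousLinearMap.adjoint Ad ∘L Ad) ((A : H →L[ℂ] H) y), ?_⟩
        have := ContinuousLinearMap.ext_iff.1 hfac (A y)
        simpa [ContinuousLinearMap.comp_apply] using this
      · rintro x ⟨y, rfl⟩
        have hmem : A y ∈ LinearMap.range (ContinuousLinearMap.adjoint A : H →ₗ[ℂ] H) :=
          hep ▸ LinearMap.mem_range_self (A : H →ₗ[ℂ] H) y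
        obtain ⟨z, hz⟩ := hmem
        have hfac : (Ad ∘L A) ∘L ContinuousLinearMap.adjoint A =
            ContinuousLinearMap.adjoint A := by
          calc (Ad ∘L A) ∘L ContinuousLinearMap.adjoint A
              = ContinuousLinearMap.adjoint (Ad ∘L A) ∘L ContinuousLinearMap.adjoint A := by
                rw [h4]
            _ = ContinuousLinearMap.adjoint (A ∘L (Ad ∘L A)) :=
                (ContinuousLinearMap.adjoint_comp _ _).symm
            _ = ContinuousLinearMap.adjoint A := by rw [h1]
        refine ⟨A y, ?_⟩
        rw [← hz]
        exact (ContinuousLinearMap.ext_iff.1 hfac z).trans hz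
    exact proj_eq_of_range_eq _ _ h3 h4 hI1 hI2 (r1.trans r2.symm)
  have hTp : T ∘L Td = Td ∘L T := projComm T Td hTep hT1 hT2 hT3 hT4
  have hSp : S ∘L Sd = Sd ∘L S := projComm S Sd hSep hS1 hS2 hS3 hS4
  -- Step 2 : pass to the ring structure.
  simp only [← ContinuousLinearMap.mul_def] at hT1 hT2 hT3 hT4 hS1 hS2 hS3 hS4 hcomm hTp hSp ⊢
  have hTdS : Td * S = S * Td := group_inv_comm hT1 hT2 hTp hcomm
  have hSdT : Sd * T = T * Sd := group_inv_comm hS1 hS2 hSp hcomm.symm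
  have hSdTd : Sd * Td = Td * Sd :=
    group_inv_comm hS1 hS2 hSp hTdS.symm
  have lcomm : ∀ {a b : H →L[ℂ] H}, a * b = b * a → ∀ c, a * (b * c) = b * (a * c) :=
    fun h c => by rw [← mul_assoc, h, mul_assoc]
  have hSTd : S * Td = Td * S := hTdS.symm
  have hST : S * T = T * S := hcomm.symm
  have hTdSd : Td * Sd = Sd * Td := hSdTd.symm
  refine ⟨hTdSd, ?_, ?_, ?_, ?_⟩
  · -- (T*S)*((Td*Sd)*(T*S)) = T*S
    calc T * S * (Td * Sd * (T * S))
        = T * (S * (Td * (Sd * (T * S)))) := by noncomm_ring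
      _ = T * (Td * (S * (Sd * (T * S)))) := by rw [lcomm hSTd]
      _ = T * (Td * (S * (T * (Sd * S)))) := by rw [lcomm hSdT]
      _ = T * (Td * (T * (S * (Sd * S)))) := by rw [lcomm hST]
      _ = T * (Td * (T * S)) := by rw [hS1]
      _ = (T * (Td * T)) * S := by noncomm_ring
      _ = T * S := by rw [hT1]
  · calc Td * Sd * (T * S * (Td * Sd))
        = Td * (Sd * (T * (S * (Td * Sd)))) := by noncomm_ring
      _ = Td * (T * (Sd * (S * (Td * Sd)))) := by rw [lcomm hSdT]
      _ = Td * (T * (Sd * (Td * (S * Sd)))) := by rw [lcomm hSTd]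
      _ = Td * (T * (Td * (Sd * (S * Sd)))) := by rw [lcomm hSdTd]
      _ = Td * (T * (Td * Sd)) := by rw [hS2]
      _ = (Td * (T * Td)) * Sd := by noncomm_ring
      _ = Td * Sd := by rw [hT2]
  · have hprod : T * S * (Td * Sd) = (T * Td) * (S * Sd) := by
      calc T * S * (Td * Sd) = T * (S * (Td * Sd)) := by noncomm_ring
        _ = T * (Td * (S * Sd)) := by rw [lcomm hSTd]
        _ = (T * Td) * (S * Sd) := by noncomm_ring
    rw [hprod]
    have hadj : ContinuousLinearMap.adjoint ((T * Td) * (S * Sd)) = (S * Sd) * (T * Td) := by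
      rw [ContinuousLinearMap.mul_def (T * Td), ContinuousLinearMap.adjoint_comp, hT3, hS3,
        ← ContinuousLinearMap.mul_def]
    rw [hadj]
    calc (S * Sd) * (T * Td) = S * (Sd * (T * Td)) := by noncomm_ring
      _ = S * (T * (Sd * Td)) := by rw [lcomm hSdT]
      _ = T * (S * (Sd * Td)) := by rw [lcomm hST]
      _ = T * (S * (Td * Sd)) := by rw [hSdTd]
      _ = T * (Td * (S * Sd)) := by rw [lcomm hSTd]
      _ = (T * Td) * (S * Sd) := by noncomm_ring
  · have hprod : Td * Sd * (T * S) = (Td * T) * (Sd * S) := by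
      calc Td * Sd * (T * S) = Td * (Sd * (T * S)) := by noncomm_ring
        _ = Td * (T * (Sd * S)) := by rw [lcomm hSdT]
        _ = (Td * T) * (Sd * S) := by noncomm_ring
    rw [hprod]
    have hadj : ContinuousLinearMap.adjoint ((Td * T) * (Sd * S)) = (Sd * S) * (Td * T) := by
      rw [ContinuousLinearMap.mul_def (Td * T), ContinuousLinearMap.adjoint_comp, hT4, hS4,
        ← ContinuousLinearMap.mul_def]
    rw [hadj]
    calc (Sd * S) * (Td * T) = Sd * (S * (Td * T)) := by noncomm_ring
      _ = Sd * (Td * (S * T)) := by rw [lcomm hSTd]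
      _ = Td * (Sd * (S * T)) := by rw [lcomm hSdTd]
      _ = Td * (Sd * (T * S)) := by rw [hST]
      _ = Td * (T * (Sd * S)) := by rw [lcomm hSdT]
      _ = (Td * T) * (Sd * S) := by noncomm_ring
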